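/- Assume the refactorization identity B̲₂(z)·B̲₁(z) = B₁(z)·B₂(z) holds for all z ∉ {z₁, z₂}, and that the scalars q̲₂†·A⁻¹·p₁, q₂†·A⁻²·p₁ and q₂†·A⁻¹·p̲₁ are nonzero. Then the common product L(z) is given explicitly in terms of the data (p̲₁, q̲₂†) and (p₁, q₂†) by the parameterization formula L(z) = [A + (z−z₁)⁻¹ • ((z₁−ζ₂)·(q̲₂†·A⁻¹·p₁)⁻¹ • (p₁·q̲₂†) + (ζ₂−ζ₁)·(q₂†·A⁻²·p₁)⁻¹ • (p₁·(q₂†·A⁻¹)))] · [A + (z−z₂)⁻¹ • ((z₂−ζ₁)·(q₂†·A⁻¹·p̲₁)⁻¹ • (p̲₁·q₂†) + (ζ₁−ζ₂)·(q₂†·A⁻²·p₁)⁻¹ • ((A⁻¹·p₁)·q₂†))] for all z ∉ {z₁, z₂}. -/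

import Mathlib

/-!
At `z = ζ₂` the trace condition makes `q̲₂† A⁻¹` a left null vector of `B̲₂(ζ₂)`, so
`q̲₂† A⁻¹ B₁(ζ₂)` is a left null vector of `B₂(ζ₂)`, hence a multiple of `q₂† A⁻¹`.
Expanding `B₁(ζ₂)` writes `q₁†` as a combination of `q̲₂†` and `q₂† A⁻¹`, and pairing with
`A⁻¹ p₁` fixes the coefficients. The transposed identity at `z = ζ₁` gives `p₂` in the same way,
and substituting both into `G₁ = p₁ q₁†` and `G₂ = p₂ q₂†` gives the formula.
-/

open Matrix

namespace Matrix

variable {R : Type*} [CommRing R] {n : Type*}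

theorem fin_one_mul_eq_smul (M : Matrix (Fin 1) (Fin 1) R) (q : Matrix (Fin 1) n R) :
    M * q = M 0 0 • q := by
  ext i j
  fin_cases i
  simp [mul_apply]

theorem transpose_mul_transpose_mul_transpose_apply [Fintype n] (x : Matrix n (Fin 1) R)
    (B : Matrix n n R) (y : Matrix (Fin 1) n R) :
    (xᵀ * Bᵀ * yᵀ) 0 0 = (y * B * x) 0 0 := by
  rw [← transpose_mul, ← transpose_mul, transpose_apply, Matrix.mul_assoc]

theorem trace_col_mul_row_mul [Fintype n] (p : Matrix n (Fin 1) R) (q : Matrix (Fin 1) n R)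
    (B : Matrix n n R) : (p * q * B).trace = (q * B * p) 0 0 := by
  rw [Matrix.mul_assoc, trace_mul_comm, trace_fin_one]

variable [Fintype n] [DecidableEq n] {A : Matrix n n R}

theorem mul_inv_mul_add_smul_col_mul_row (hA : IsUnit A.det) (x q : Matrix (Fin 1) n R)
    (p : Matrix n (Fin 1) R) (a : R) :
    x * A⁻¹ * (A + a • (p * q)) = x + (a * (x * A⁻¹ * p) 0 0) • q := by
  rw [Matrix.mul_add, Matrix.mul_assoc x, nonsing_inv_mul A hA, Matrix.mul_one, Matrix.mul_smul,
    ← Matrix.mul_assoc, fin_one_mul_eq_smul, smul_smul]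

theorem exists_eq_smul_mul_inv_of_mul_add_smul_col_mul_row_eq_zero (hA : IsUnit A.det)
    {w q : Matrix (Fin 1) n R} {p : Matrix n (Fin 1) R} {a : R}
    (h : w * (A + a • (p * q)) = 0) : ∃ c : R, w = c • (q * A⁻¹) := by
  refine ⟨-(a * (w * p) 0 0), ?_⟩
  have hwA : w * A = (-(a * (w * p) 0 0)) • q := by
    rw [Matrix.mul_add, Matrix.mul_smul, ← Matrix.mul_assoc, fin_one_mul_eq_smul, smul_smul,
      add_eq_zero_iff_eq_neg] at h
    rw [h, neg_smul]
  calc w = w * A * A⁻¹ := by rw [Matrix.mul_assoc, mul_nonsing_inv A hA, Matrix.mul_one]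
    _ = _ := by rw [hwA, Matrix.smul_mul]

end Matrix

section Refactorization

variable {K : Type*} [Field K] {n : Type*} [Fintype n] [DecidableEq n]

theorem left_row_eq_of_refactorization
    {A X : Matrix n n K} (hA : IsUnit A.det) {z₁ z₂ ζ ζ₁ b : K} (hζz₁ : ζ ≠ z₁) (hζz₂ : ζ ≠ z₂)
    {pu p₁ p₂ : Matrix n (Fin 1) K} {qu q₁ q₂ : Matrix (Fin 1) n K}
    (hu : (qu * A⁻¹ * pu) 0 0 = z₂ - ζ) (h₁ : (q₁ * A⁻¹ * p₁) 0 0 = z₁ - ζ₁)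
    (h : (A + (ζ - z₂)⁻¹ • (pu * qu)) * X = (A + (ζ - z₁)⁻¹ • (p₁ * q₁)) * (A + b • (p₂ * q₂)))
    (hs₁ : (qu * A⁻¹ * p₁) 0 0 ≠ 0) (hs₂ : (q₂ * (A ^ 2)⁻¹ * p₁) 0 0 ≠ 0) :
    q₁ = ((z₁ - ζ) * ((qu * A⁻¹ * p₁) 0 0)⁻¹) • qu
      + ((ζ - ζ₁) * ((q₂ * (A ^ 2)⁻¹ * p₁) 0 0)⁻¹) • (q₂ * A⁻¹) := by
  have hAsq : q₂ * A⁻¹ * (A⁻¹ * p₁) = q₂ * (A ^ 2)⁻¹ * p₁ := by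
    rw [sq, Matrix.mul_inv_rev, Matrix.mul_assoc q₂, Matrix.mul_assoc, Matrix.mul_assoc]
  set s₁ := (qu * A⁻¹ * p₁) 0 0
  set s₂ := (q₂ * (A ^ 2)⁻¹ * p₁) 0 0
  have hζz₁' : ζ - z₁ ≠ 0 := sub_ne_zero.mpr hζz₁
  have hζz₂' : ζ - z₂ ≠ 0 := sub_ne_zero.mpr hζz₂
  have hker : qu * A⁻¹ * (A + (ζ - z₂)⁻¹ • (pu * qu)) = 0 := by
    rw [mul_inv_mul_add_smul_col_mul_row hA, hu, ← neg_sub ζ, mul_neg, inv_mul_cancel₀ hζz₂',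
      neg_one_smul, add_neg_cancel]
  have hw : qu * A⁻¹ * (A + (ζ - z₁)⁻¹ • (p₁ * q₁)) * (A + b • (p₂ * q₂)) = 0 := by
    rw [Matrix.mul_assoc, ← h, ← Matrix.mul_assoc, hker, Matrix.zero_mul]
  obtain ⟨c, hc⟩ := exists_eq_smul_mul_inv_of_mul_add_smul_col_mul_row_eq_zero hA hw
  rw [mul_inv_mul_add_smul_col_mul_row hA] at hc
  have hcs : s₁ + (ζ - z₁)⁻¹ * s₁ * (z₁ - ζ₁) = c * s₂ := by
    have := congrArg (fun M => (M * (A⁻¹ * p₁)) 0 0) hc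
    simp only [Matrix.add_mul, Matrix.smul_mul, hAsq] at this
    simpa [← Matrix.mul_assoc, h₁] using this
  have hq₁ : q₁ = ((ζ - z₁)⁻¹ * s₁)⁻¹ • (c • (q₂ * A⁻¹) - qu) := by
    rw [← hc, add_sub_cancel_left, smul_smul, inv_mul_cancel₀ (by simp [hζz₁', hs₁]), one_smul]
  rw [hq₁, eq_div_of_mul_eq hs₂ hcs.symm]
  match_scalars <;> field_simp <;> ring

theorem right_col_eq_of_refactorization
    {A X : Matrix n n K} (hA : IsUnit A.det) {z₁ z₂ ζ ζ₂ b : K} (hζz₁ : ζ ≠ z₁) (hζz₂ : ζ ≠ z₂)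
    {pu p₁ p₂ : Matrix n (Fin 1) K} {qu q₁ q₂ : Matrix (Fin 1) n K}
    (hu : (qu * A⁻¹ * pu) 0 0 = z₁ - ζ) (h₂ : (q₂ * A⁻¹ * p₂) 0 0 = z₂ - ζ₂)
    (h : X * (A + (ζ - z₁)⁻¹ • (pu * qu)) = (A + b • (p₁ * q₁)) * (A + (ζ - z₂)⁻¹ • (p₂ * q₂)))
    (hs₁ : (q₂ * A⁻¹ * pu) 0 0 ≠ 0) (hs₂ : (q₂ * (A ^ 2)⁻¹ * p₁) 0 0 ≠ 0) :
    p₂ = ((z₂ - ζ) * ((q₂ * A⁻¹ * pu) 0 0)⁻¹) • pu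
      + ((ζ - ζ₂) * ((q₂ * (A ^ 2)⁻¹ * p₁) 0 0)⁻¹) • (A⁻¹ * p₁) := by
  have hAt : IsUnit Aᵀ.det := by rwa [det_transpose]
  have hT (x : Matrix n (Fin 1) K) (B : Matrix n n K) (y : Matrix (Fin 1) n K) :
      (xᵀ * (Bᵀ)⁻¹ * yᵀ) 0 0 = (y * B⁻¹ * x) 0 0 := by
    rw [← transpose_nonsing_inv, transpose_mul_transpose_mul_transpose_apply]
  have hrow := left_row_eq_of_refactorization hAt hζz₂ hζz₁ (by rwa [hT]) (by rwa [hT])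
    (by simpa [transpose_mul] using congrArg transpose h)
    (by rwa [hT]) (by rwa [← transpose_pow, hT])
  rw [hT, ← transpose_pow, hT] at hrow
  simpa [transpose_nonsing_inv] using congrArg transpose hrow

end Refactorization

theorem isospectral_parameterization_general
    (r : ℕ)
    (A : Matrix (Fin r) (Fin r) ℂ) (hA : IsUnit A.det)
    (z₁ z₂ ζ₁ ζ₂ : ℂ)
    (h1a : z₁ ≠ ζ₁) (h1b : z₁ ≠ ζ₂)
    (h2a : z₂ ≠ ζ₁) (h2b : z₂ ≠ ζ₂)
    (pu₁ pu₂ p₁ p₂ : Matrix (Fin r) (Fin 1) ℂ)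
    (qu₁ qu₂ q₁ q₂ : Matrix (Fin 1) (Fin r) ℂ)
    (hζu₁ : (pu₁ * qu₁ * A⁻¹).trace = z₁ - ζ₁)
    (hζ₁ : (p₁ * q₁ * A⁻¹).trace = z₁ - ζ₁)
    (hζu₂ : (pu₂ * qu₂ * A⁻¹).trace = z₂ - ζ₂)
    (hζ₂ : (p₂ * q₂ * A⁻¹).trace = z₂ - ζ₂)
    (hre : ∀ z : ℂ, z ≠ z₁ → z ≠ z₂ →
      (A + (z - z₂)⁻¹ • (pu₂ * qu₂)) * (A + (z - z₁)⁻¹ • (pu₁ * qu₁)) =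
      (A + (z - z₁)⁻¹ • (p₁ * q₁)) * (A + (z - z₂)⁻¹ • (p₂ * q₂)))
    (hs₁ : (qu₂ * A⁻¹ * p₁) 0 0 ≠ 0)
    (hs₂ : (q₂ * (A ^ 2)⁻¹ * p₁) 0 0 ≠ 0)
    (hs₃ : (q₂ * A⁻¹ * pu₁) 0 0 ≠ 0) :
    ∀ z : ℂ, z ≠ z₁ → z ≠ z₂ →
      (A + (z - z₁)⁻¹ • (p₁ * q₁)) * (A + (z - z₂)⁻¹ • (p₂ * q₂)) =
      (A + (z - z₁)⁻¹ •
        (((z₁ - ζ₂) * ((qu₂ * A⁻¹ * p₁) 0 0)⁻¹) • (p₁ * qu₂)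
          + ((ζ₂ - ζ₁) * ((q₂ * (A ^ 2)⁻¹ * p₁) 0 0)⁻¹) • (p₁ * (q₂ * A⁻¹)))) *
      (A + (z - z₂)⁻¹ •
        (((z₂ - ζ₁) * ((q₂ * A⁻¹ * pu₁) 0 0)⁻¹) • (pu₁ * q₂)
          + ((ζ₁ - ζ₂) * ((q₂ * (A ^ 2)⁻¹ * p₁) 0 0)⁻¹) • ((A⁻¹ * p₁) * q₂))) := by
  rw [trace_col_mul_row_mul] at hζu₁ hζ₁ hζu₂ hζ₂
  have hq₁ := left_row_eq_of_refactorization hA h1b.symm h2b.symm hζu₂ hζ₁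
    (hre ζ₂ h1b.symm h2b.symm) hs₁ hs₂
  have hp₂ := right_col_eq_of_refactorization hA h1a.symm h2a.symm hζu₁ hζ₂
    (hre ζ₁ h1a.symm h2a.symm) hs₃ hs₂
  intro z _ _
  rw [hq₁, hp₂, Matrix.mul_add p₁, Matrix.add_mul _ _ q₂]
  simp only [Matrix.mul_smul, Matrix.smul_mul]

/-- Explicit parameterization of the common product
`L(z) = B̲₂(z)B̲₁(z) = B₁(z)B₂(z)` in terms of `(p̲₁, q̲₂†)` and `(p₁, q₂†)`. -/
theorem isospectral_parameterization
    (r : ℕ) (hr : 1 ≤ r)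
    (A : Matrix (Fin r) (Fin r) ℂ) (hA : IsUnit A.det)
    (z₁ z₂ ζ₁ ζ₂ : ℂ)
    (h12 : z₁ ≠ z₂) (h1a : z₁ ≠ ζ₁) (h1b : z₁ ≠ ζ₂)
    (h2a : z₂ ≠ ζ₁) (h2b : z₂ ≠ ζ₂) (hab : ζ₁ ≠ ζ₂)
    (pu₁ pu₂ p₁ p₂ : Matrix (Fin r) (Fin 1) ℂ)
    (qu₁ qu₂ q₁ q₂ : Matrix (Fin 1) (Fin r) ℂ)
    (hpu₁ : pu₁ ≠ 0) (hpu₂ : pu₂ ≠ 0) (hp₁ : p₁ ≠ 0) (hp₂ : p₂ ≠ 0)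
    (hqu₁ : qu₁ ≠ 0) (hqu₂ : qu₂ ≠ 0) (hq₁ : q₁ ≠ 0) (hq₂ : q₂ ≠ 0)
    (hζu₁ : (pu₁ * qu₁ * A⁻¹).trace = z₁ - ζ₁)
    (hζ₁ : (p₁ * q₁ * A⁻¹).trace = z₁ - ζ₁)
    (hζu₂ : (pu₂ * qu₂ * A⁻¹).trace = z₂ - ζ₂)
    (hζ₂ : (p₂ * q₂ * A⁻¹).trace = z₂ - ζ₂)
    (hre : ∀ z : ℂ, z ≠ z₁ → z ≠ z₂ →
      (A + (z - z₂)⁻¹ • (pu₂ * qu₂)) * (A + (z - z₁)⁻¹ • (pu₁ * qu₁)) =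
      (A + (z - z₁)⁻¹ • (p₁ * q₁)) * (A + (z - z₂)⁻¹ • (p₂ * q₂)))
    (hs₁ : (qu₂ * A⁻¹ * p₁) 0 0 ≠ 0)
    (hs₂ : (q₂ * (A ^ 2)⁻¹ * p₁) 0 0 ≠ 0)
    (hs₃ : (q₂ * A⁻¹ * pu₁) 0 0 ≠ 0) :
    ∀ z : ℂ, z ≠ z₁ → z ≠ z₂ →
      (A + (z - z₁)⁻¹ • (p₁ * q₁)) * (A + (z - z₂)⁻¹ • (p₂ * q₂)) =
      (A + (z - z₁)⁻¹ •
        (((z₁ - ζ₂) * ((qu₂ * A⁻¹ * p₁) 0 0)⁻¹) • (p₁ * qu₂)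
          + ((ζ₂ - ζ₁) * ((q₂ * (A ^ 2)⁻¹ * p₁) 0 0)⁻¹) • (p₁ * (q₂ * A⁻¹)))) *
      (A + (z - z₂)⁻¹ •
        (((z₂ - ζ₁) * ((q₂ * A⁻¹ * pu₁) 0 0)⁻¹) • (pu₁ * q₂)
          + ((ζ₁ - ζ₂) * ((q₂ * (A ^ 2)⁻¹ * p₁) 0 0)⁻¹) • ((A⁻¹ * p₁) * q₂))) :=
  isospectral_parameterization_general r A hA z₁ z₂ ζ₁ ζ₂ h1a h1b h2a h2b pu₁ pu₂ p₁ p₂ qu₁ qu₂ q₁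
    q₂ hζu₁ hζ₁ hζu₂ hζ₂ hre hs₁ hs₂ hs₃
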